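/- Fix t ∈ [0,1), n with 2^N ≤ n < 2^{N+1}, and m = ∑_{i=0}^{N−1} t_{i+1} 2^i. Then L_n^{(t)} ≤ 2V(m) + |T(n,m)| + 2, where T(n,m) = {i : 1 ≤ i ≤ N−1, n_i ≠ n_{i−1}, m_i = m_{i−1}} and V is the binary variation. -/

import Mathlib

open MeasureTheory Finset

noncomputable section

/-- The dyadic group: countable product of ℤ/2. -/
abbrev G := ℕ → ZMod 2

/-- Binary digits of a real number, as an element of the dyadic group. -/
def toG (x : ℝ) : G := fun n => ((⌊x * 2 ^ (n + 1)⌋ : ℤ) : ZMod 2)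

/-- Haar (product) measure on the dyadic group, realized as the pushforward
of Lebesgue measure on `[0,1)` under the binary digit map. -/
def muG : Measure G := (volume.restrict (Set.Ico (0:ℝ) 1)).map toG

/-- Walsh–Paley functions. -/
def walsh (m : ℕ) (x : G) : ℝ :=
  ∏ k ∈ Finset.range m, if m.testBit k then (-1 : ℝ) ^ ((x k).val) else 1

/-- Walsh–Dirichlet kernel. -/
def Dir (n : ℕ) (x : G) : ℝ := ∑ k ∈ Finset.range n, walsh k x

/-- Dyadic interval `I_n` of rank `n` about `0`. -/
def Iset (n : ℕ) : Set G := {x | ∀ i < n, x i = 0}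

/-- `k`-th binary digit of `n`, as a natural number. -/
def bit (n k : ℕ) : ℕ := (n.testBit k).toNat

/-- `α_i(n) = |∑_{k<i} n_k 2^k − n_i 2^i|`. -/
def alpha (n i : ℕ) : ℤ :=
  |(∑ k ∈ Finset.range i, (bit n k : ℤ) * 2 ^ k) - (bit n i : ℤ) * 2 ^ i|

/-- Binary variation `V(n) = n_0 + ∑_{k≥1} |n_k − n_{k−1}|`. -/
def V (n : ℕ) : ℕ :=
  bit n 0 + ∑ k ∈ Finset.range n, if n.testBit (k+1) ≠ n.testBit k then 1 else 0

/-- `A(n)`: indices where consecutive binary digits differ (with `n_{−1} = 0`). -/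
def Aset (n : ℕ) : Finset ℕ :=
  (Finset.range (n+1)).filter
    (fun i => if i = 0 then n.testBit 0 else n.testBit i ≠ n.testBit (i-1))

/-- `S(n) = ∑_{i ∈ A(n)} α_i(n)/2^{i+1}`. -/
def S (n : ℕ) : ℝ := ∑ i ∈ Aset n, (alpha n i : ℝ) / 2 ^ (i+1)

/-- `j`-th binary digit of a real number `t ∈ [0,1)`. -/
def tdig (t : ℝ) (j : ℕ) : ℕ := (⌊t * 2 ^ (j+1)⌋ % 2).toNat

/-- `m = ∑_{i=0}^{N-1} t_{i+1} 2^i`. -/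
def mOf (t : ℝ) (N : ℕ) : ℕ := ∑ i ∈ Finset.range N, tdig t (i+1) * 2 ^ i

/-- Conjugate Walsh–Dirichlet kernel
`D̃_n^{(t)} = D_n − 2 w_m D_m − 2 t_{N+1}(D_n − D_{2^N})` where `m = mOf t N`. -/
def Dconj (t : ℝ) (N n : ℕ) (x : G) : ℝ :=
  Dir n x - 2 * walsh (mOf t N) x * Dir (mOf t N) x
    - 2 * (tdig t (N+1) : ℝ) * (Dir n x - Dir (2^N) x)

/-- Lebesgue constant of the conjugate transform. -/
def Leb (t : ℝ) (N n : ℕ) : ℝ := ∫ x, |Dconj t N n x| ∂muG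

/-- `T(a,b) = {i : 1 ≤ i ≤ N−1, a_i ≠ a_{i−1}, b_i = b_{i−1}}`. -/
def Tset (N a b : ℕ) : Finset ℕ :=
  (Finset.Icc 1 (N-1)).filter
    (fun i => a.testBit i ≠ a.testBit (i-1) ∧ b.testBit i = b.testBit (i-1))

/-!
The integral is an average over the `2^(N+1)` dyadic cells of rank `N+1`, on each of which
`D̃_n^{(t)}` is constant. Pair the cells `2q` and `2q+1`, which differ only in the last digit
`x_N`. If the first nonzero digit of the pair is `x_s` with `s < N`, then there
`w_k D_k = ∑_{j<s} k_j 2^j - k_s 2^s` and `D_{2^N} = 0`, and flipping `x_N` flips the sign of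
`D_n` but not of `w_m D_m`. So the pair contributes `|a + b| + |a - b| ≤ 2 max(2α_s(m), α_s(n))`,
which is controlled by the digit jumps of `m` and `n` at positions `j ≤ s`, each with weight `2^j`.
There are `2^(N-1-s)` pairs at level `s`, so a jump at `j` is counted with total weight below
`2^N`: after normalisation the jumps of `m` give `2V(m)`, those of `n` that are not jumps of `m`
give `|T(n,m)| + 1`, and the pair at the origin gives the last `1`.
-/

theorem testBit_eq_false_of_lt_two_pow_of_le {k s i : ℕ} (hk : k < 2 ^ s) (hi : s ≤ i) :
    k.testBit i = false :=
  Nat.testBit_lt_two_pow (hk.trans_le (Nat.pow_le_pow_right two_pos hi))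

theorem walsh_eq_prod_range {k L : ℕ} (hk : k < 2 ^ L) (x : G) :
    walsh k x = ∏ i ∈ range L, if k.testBit i then (-1 : ℝ) ^ (x i).val else 1 := by
  have hmin : k < 2 ^ min k L := by
    rcases min_choice k L with h | h <;> rw [h]
    exacts [Nat.lt_two_pow_self, hk]
  have trunc : ∀ {A}, min k L ≤ A →
      ∏ i ∈ range A, (if k.testBit i then (-1 : ℝ) ^ (x i).val else 1)
        = ∏ i ∈ range (min k L), if k.testBit i then (-1 : ℝ) ^ (x i).val else 1 := fun hA =>
    (prod_subset (range_subset_range.2 hA) fun i _ hi => by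
      rw [testBit_eq_false_of_lt_two_pow_of_le hmin (not_lt.1 (mem_range.not.1 hi))]; rfl).symm
  rw [walsh, trunc (min_le_left k L), trunc (min_le_right k L)]

theorem walsh_two_pow (a : ℕ) (x : G) : walsh (2 ^ a) x = (-1) ^ (x a).val := by
  rw [walsh, prod_eq_single_of_mem a (mem_range.2 Nat.lt_two_pow_self)
    fun i _ hi => by simp [Ne.symm hi], Nat.testBit_two_pow_self, if_pos rfl]

theorem walsh_two_pow_of_eq_one {a : ℕ} {x : G} (hx : x a = 1) : walsh (2 ^ a) x = -1 := by
  rw [walsh_two_pow, hx, ZMod.val_one, pow_one]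

theorem walsh_two_pow_add {j i : ℕ} (hi : i < 2 ^ j) (x : G) :
    walsh (2 ^ j + i) x = walsh (2 ^ j) x * walsh i x := by
  have hsum : 2 ^ j + i < 2 ^ (j + 1) := by rw [pow_succ]; omega
  have hpow : 2 ^ j < 2 ^ (j + 1) := Nat.pow_lt_pow_right one_lt_two j.lt_succ_self
  rw [walsh_eq_prod_range hsum, walsh_eq_prod_range hpow, walsh_eq_prod_range (hi.trans hpow),
    ← prod_mul_distrib]
  refine prod_congr rfl fun l hl => ?_
  rcases (Nat.lt_succ_iff.1 (mem_range.1 hl)).lt_or_eq with hlj | rfl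
  · simp [Nat.testBit_two_pow_add_gt hlj, hlj.ne']
  · simp [Nat.testBit_two_pow_add_eq, Nat.testBit_lt_two_pow hi]

theorem abs_walsh (k : ℕ) (x : G) : |walsh k x| = 1 := by
  rw [walsh, abs_prod]
  exact prod_eq_one fun i _ => by split_ifs <;> simp

theorem walsh_mul_self (k : ℕ) (x : G) : walsh k x * walsh k x = 1 := by
  rw [← abs_mul_abs_self, abs_walsh, one_mul]

theorem walsh_congr {k L : ℕ} (hk : k < 2 ^ L) {x y : G} (h : ∀ i < L, x i = y i) :
    walsh k x = walsh k y := by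
  rw [walsh_eq_prod_range hk, walsh_eq_prod_range hk]
  exact prod_congr rfl fun i hi => by rw [h i (mem_range.1 hi)]

theorem walsh_eq_one {k s : ℕ} (hk : k < 2 ^ s) {x : G} (hx : ∀ i < s, x i = 0) :
    walsh k x = 1 := by
  rw [walsh_congr hk hx, walsh_eq_prod_range hk]
  exact prod_eq_one fun i _ => by simp

theorem walsh_flip {N k : ℕ} (hk₁ : 2 ^ N ≤ k) (hk₂ : k < 2 ^ (N + 1)) {x y : G}
    (hxy : ∀ i < N, x i = y i) (hx : x N = 0) (hy : y N = 1) :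
    walsh k y = -walsh k x := by
  obtain ⟨k', rfl⟩ := Nat.exists_eq_add_of_le hk₁
  have hk' : k' < 2 ^ N := by rw [pow_succ] at hk₂; omega
  rw [walsh_two_pow_add hk', walsh_two_pow_add hk', walsh_two_pow_of_eq_one hy, walsh_two_pow, hx,
    walsh_congr hk' hxy]
  simp

theorem Dir_two_pow_add {j l : ℕ} (hl : l ≤ 2 ^ j) (x : G) :
    Dir (2 ^ j + l) x = Dir (2 ^ j) x + walsh (2 ^ j) x * Dir l x := by
  rw [Dir, Dir, Dir, sum_range_add, mul_sum]
  exact congrArg _ (sum_congr rfl fun i hi => walsh_two_pow_add ((mem_range.1 hi).trans_le hl) x)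

theorem Dir_congr {k L : ℕ} (hk : k ≤ 2 ^ L) {x y : G} (h : ∀ i < L, x i = y i) :
    Dir k x = Dir k y :=
  sum_congr rfl fun _ hl => walsh_congr ((mem_range.1 hl).trans_le hk) h

theorem Dir_eq_self {k s : ℕ} (hk : k ≤ 2 ^ s) {x : G} (hx : ∀ i < s, x i = 0) :
    Dir k x = k := by
  rw [Dir, sum_congr rfl fun l hl => walsh_eq_one ((mem_range.1 hl).trans_le hk) hx]
  simp

theorem Dir_two_pow_eq_zero {s a : ℕ} (hsa : s < a) {x : G} (hx : x s = 1) :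
    Dir (2 ^ a) x = 0 := by
  induction a, hsa using Nat.le_induction with
  | base =>
    rw [pow_succ, mul_two, Dir_two_pow_add le_rfl, walsh_two_pow_of_eq_one hx]
    ring
  | succ a _ ih => rw [pow_succ, mul_two, Dir_two_pow_add le_rfl, ih, mul_zero, add_zero]

theorem sum_range_bit_mul_two_pow (k s : ℕ) : ∑ j ∈ range s, bit k j * 2 ^ j = k % 2 ^ s := by
  induction s with
  | zero => simp [Nat.mod_one]
  | succ s ih => rw [sum_range_succ, ih, Nat.mod_pow_succ, bit, Nat.toNat_testBit, mul_comm]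

def annulusValue (k s : ℕ) : ℤ := ∑ j ∈ range s, (bit k j : ℤ) * 2 ^ j - bit k s * 2 ^ s

theorem annulusValue_eq (k s : ℕ) :
    annulusValue k s = ((k % 2 ^ s : ℕ) : ℤ) - bit k s * 2 ^ s := by
  rw [annulusValue, ← sum_range_bit_mul_two_pow]
  push_cast
  rfl

theorem annulusValue_of_lt {k s : ℕ} (hk : k < 2 ^ s) : annulusValue k s = k := by
  rw [annulusValue_eq, Nat.mod_eq_of_lt hk, bit, Nat.testBit_lt_two_pow hk]
  simp

theorem annulusValue_two_pow_add_self {k s : ℕ} (hk : k < 2 ^ s) :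
    annulusValue (2 ^ s + k) s = k - 2 ^ s := by
  rw [annulusValue_eq, Nat.add_mod_left, Nat.mod_eq_of_lt hk, bit, Nat.testBit_two_pow_add_eq,
    Nat.testBit_lt_two_pow hk]
  simp

theorem annulusValue_two_pow_add {k s j : ℕ} (hsj : s < j) :
    annulusValue (2 ^ j + k) s = annulusValue k s := by
  obtain ⟨c, hc⟩ := pow_dvd_pow 2 hsj.le
  rw [annulusValue_eq, annulusValue_eq, hc, add_comm, Nat.add_mul_mod_self_left, bit, bit, ← hc,
    add_comm, Nat.testBit_two_pow_add_gt hsj]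

theorem annulusValue_succ (k s : ℕ) :
    annulusValue k (s + 1)
      = annulusValue k s + ((bit k s : ℤ) - bit k (s + 1)) * 2 ^ (s + 1) := by
  rw [annulusValue, annulusValue, sum_range_succ]
  ring

theorem walsh_mul_Dir_of_annulus {s : ℕ} {x : G} (hx₀ : ∀ i < s, x i = 0) (hxs : x s = 1)
    (k : ℕ) : walsh k x * Dir k x = annulusValue k s := by
  induction k using Nat.strong_induction_on with
  | _ k ih =>
  rcases lt_or_ge k (2 ^ s) with hks | hks
  · rw [walsh_eq_one hks hx₀, Dir_eq_self hks.le hx₀, annulusValue_of_lt hks, one_mul,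
      Int.cast_natCast]
  have hk0 : k ≠ 0 := (Nat.two_pow_pos s).trans_le hks |>.ne'
  obtain ⟨j, hjk, hkj⟩ : ∃ j, 2 ^ j ≤ k ∧ k < 2 ^ (j + 1) :=
    ⟨Nat.log 2 k, Nat.pow_log_le_self 2 hk0, Nat.lt_pow_succ_log_self one_lt_two k⟩
  have hsj : s ≤ j :=
    Nat.lt_succ_iff.1 ((Nat.pow_lt_pow_iff_right (by norm_num)).1 (hks.trans_lt hkj))
  obtain ⟨k', rfl⟩ := Nat.exists_eq_add_of_le hjk
  have hk' : k' < 2 ^ j := by rw [pow_succ] at hkj; omega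
  rw [walsh_two_pow_add hk', Dir_two_pow_add hk'.le]
  rcases hsj.lt_or_eq with hsj | rfl
  · rw [Dir_two_pow_eq_zero hsj hxs, annulusValue_two_pow_add hsj, ← ih k' (by omega)]
    linear_combination (walsh k' x * Dir k' x) * walsh_mul_self (2 ^ j) x
  · rw [walsh_two_pow_of_eq_one hxs, walsh_eq_one hk' hx₀, Dir_eq_self le_rfl hx₀,
      Dir_eq_self hk'.le hx₀, annulusValue_two_pow_add_self hk']
    push_cast
    ring

theorem Dir_eq_walsh_mul_of_annulus {s : ℕ} {x : G} (hx₀ : ∀ i < s, x i = 0) (hxs : x s = 1)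
    (k : ℕ) : Dir k x = walsh k x * annulusValue k s := by
  rw [← walsh_mul_Dir_of_annulus hx₀ hxs, ← mul_assoc, walsh_mul_self, one_mul]

def digitJump (c j : ℕ) : Bool := if j = 0 then c.testBit 0 else c.testBit j != c.testBit (j - 1)

theorem alpha_eq_abs_annulusValue (k s : ℕ) : alpha k s = |annulusValue k s| := rfl

theorem alpha_le_sum_digitJump (k s : ℕ) :
    alpha k s ≤ ∑ j ∈ range (s + 1), if digitJump k j then (2 : ℤ) ^ j else 0 := by
  rw [alpha_eq_abs_annulusValue]
  induction s with
  | zero => cases h : k.testBit 0 <;> simp [annulusValue, bit, digitJump, h]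
  | succ s ih =>
    have hjump : |(bit k s : ℤ) - bit k (s + 1)| * 2 ^ (s + 1)
        ≤ if digitJump k (s + 1) then (2 : ℤ) ^ (s + 1) else 0 := by
      cases h₁ : k.testBit s <;> cases h₂ : k.testBit (s + 1) <;>
        simp [bit, digitJump, h₁, h₂]
    rw [annulusValue_succ, sum_range_succ]
    calc _ ≤ |annulusValue k s| + |(bit k s : ℤ) - bit k (s + 1)| * 2 ^ (s + 1) :=
          (abs_add_le _ _).trans_eq (by rw [abs_mul, abs_pow, abs_two])
      _ ≤ _ := add_le_add ih hjump

theorem abs_Dir_of_annulus {s : ℕ} {x : G} (hx₀ : ∀ i < s, x i = 0) (hxs : x s = 1)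
    (k : ℕ) : |Dir k x| = alpha k s := by
  rw [Dir_eq_walsh_mul_of_annulus hx₀ hxs, abs_mul, abs_walsh, one_mul, alpha_eq_abs_annulusValue,
    Int.cast_abs]

theorem abs_add_add_abs_sub_le {a b W : ℝ} (ha : |a| ≤ W) (hb : |b| ≤ W) :
    |a + b| + |a - b| ≤ 2 * W := by
  obtain ⟨ha₁, ha₂⟩ := abs_le.mp ha
  obtain ⟨hb₁, hb₂⟩ := abs_le.mp hb
  rcases abs_cases (a + b) with ⟨h₁, -⟩ | ⟨h₁, -⟩ <;>
    rcases abs_cases (a - b) with ⟨h₂, -⟩ | ⟨h₂, -⟩ <;> linarith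

theorem tdig_le_one (t : ℝ) (j : ℕ) : tdig t j ≤ 1 := by
  rcases Int.emod_two_eq_zero_or_one ⌊t * 2 ^ (j + 1)⌋ with h | h <;> simp [tdig, h]

theorem abs_one_sub_two_mul_tdig_le (t : ℝ) (j : ℕ) : |1 - 2 * (tdig t j : ℝ)| ≤ 1 := by
  have : (tdig t j : ℝ) ≤ 1 := by exact_mod_cast tdig_le_one t j
  rw [abs_le]; constructor <;> linarith [(tdig t j).cast_nonneg (α := ℝ)]

theorem mOf_lt (t : ℝ) (N : ℕ) : mOf t N < 2 ^ N := by
  induction N with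
  | zero => simp [mOf]
  | succ N ih =>
    rw [mOf, sum_range_succ, ← mOf, pow_succ]
    nlinarith [tdig_le_one t (N + 1)]

def jumpWeight (n m j : ℕ) : ℕ := if digitJump m j then 2 else if digitJump n j then 1 else 0

theorem abs_Dconj_add_abs_Dconj_le_of_annulus {t : ℝ} {N n s : ℕ} (hn₁ : 2 ^ N ≤ n)
    (hn₂ : n < 2 ^ (N + 1)) (hsN : s < N) {x y : G} (hx₀ : ∀ i < s, x i = 0) (hxs : x s = 1)
    (hxy : ∀ i < N, x i = y i) (hxN : x N = 0) (hyN : y N = 1) :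
    |Dconj t N n x| + |Dconj t N n y|
      ≤ 2 * ∑ j ∈ range (s + 1), (jumpWeight n (mOf t N) j : ℝ) * 2 ^ j := by
  set m := mOf t N
  set ε : ℝ := (tdig t (N + 1) : ℝ)
  have hy₀ : ∀ i < s, y i = 0 := fun i hi => hxy i (hi.trans hsN) ▸ hx₀ i hi
  have hys : y s = 1 := hxy s hsN ▸ hxs
  have hDx : Dconj t N n x = -2 * annulusValue m s + (1 - 2 * ε) * Dir n x := by
    rw [Dconj, Dir_two_pow_eq_zero hsN hxs]
    linear_combination (-2) * walsh_mul_Dir_of_annulus hx₀ hxs m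
  have hDy : Dconj t N n y = -2 * annulusValue m s - (1 - 2 * ε) * Dir n x := by
    rw [Dconj, Dir_two_pow_eq_zero hsN hys, Dir_eq_walsh_mul_of_annulus hy₀ hys n,
      walsh_flip hn₁ hn₂ hxy hxN hyN, Dir_eq_walsh_mul_of_annulus hx₀ hxs n]
    linear_combination (-2) * walsh_mul_Dir_of_annulus hy₀ hys m
  have hweight : ∀ k,
      (alpha k s : ℝ) ≤ ∑ j ∈ range (s + 1), if digitJump k j then (2 : ℝ) ^ j else 0 :=
    fun k => by exact_mod_cast alpha_le_sum_digitJump k s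
  rw [hDx, hDy]
  refine abs_add_add_abs_sub_le ?_ ?_
  · calc |-2 * (annulusValue m s : ℝ)| = 2 * (alpha m s : ℝ) := by
          rw [abs_mul, alpha_eq_abs_annulusValue, Int.cast_abs]; norm_num
      _ ≤ 2 * ∑ j ∈ range (s + 1), if digitJump m j then (2 : ℝ) ^ j else 0 := by
          gcongr; exact hweight m
      _ ≤ _ := by
          rw [mul_sum]
          exact sum_le_sum fun j _ => by unfold jumpWeight; split_ifs <;> simp
  · calc |(1 - 2 * ε) * Dir n x| ≤ |Dir n x| := by
          rw [abs_mul]; exact mul_le_of_le_one_left (abs_nonneg _) (abs_one_sub_two_mul_tdig_le t _)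
      _ = alpha n s := abs_Dir_of_annulus hx₀ hxs n
      _ ≤ _ := (hweight n).trans <| sum_le_sum fun j _ => by
          unfold jumpWeight; split_ifs <;> simp_all

theorem abs_Dconj_add_abs_Dconj_le_of_origin {t : ℝ} {N n : ℕ} (hn₁ : 2 ^ N ≤ n)
    (hn₂ : n < 2 ^ (N + 1)) {x y : G} (hx : ∀ i < N + 1, x i = 0) (hy₀ : ∀ i < N, y i = 0)
    (hyN : y N = 1) :
    |Dconj t N n x| + |Dconj t N n y| ≤ 2 * 2 ^ N := by
  set m := mOf t N
  set ε : ℝ := (tdig t (N + 1) : ℝ)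
  have hm : m < 2 ^ N := mOf_lt t N
  obtain ⟨n', rfl⟩ := Nat.exists_eq_add_of_le hn₁
  have hn' : n' < 2 ^ N := by rw [pow_succ] at hn₂; omega
  have hpow : 2 ^ N ≤ 2 ^ (N + 1) := Nat.pow_le_pow_right two_pos N.le_succ
  have hDx : Dconj t N (2 ^ N + n') x = (2 ^ N - 2 * m) + (1 - 2 * ε) * n' := by
    rw [Dconj, Dir_eq_self hn₂.le hx, Dir_eq_self (hm.le.trans hpow) hx, Dir_eq_self hpow hx,
      walsh_eq_one (hm.trans_le hpow) hx]
    push_cast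
    ring
  have hwm : walsh m y * Dir m y = m := by
    rw [walsh_mul_Dir_of_annulus hy₀ hyN, annulusValue_of_lt hm, Int.cast_natCast]
  have hDy : Dconj t N (2 ^ N + n') y = (2 ^ N - 2 * m) - (1 - 2 * ε) * n' := by
    rw [Dconj, Dir_eq_walsh_mul_of_annulus hy₀ hyN, walsh_two_pow_add hn',
      walsh_two_pow_of_eq_one hyN, walsh_eq_one hn' hy₀, annulusValue_two_pow_add_self hn',
      Dir_eq_self le_rfl hy₀]
    push_cast
    linear_combination (-2) * hwm
  rw [hDx, hDy]
  have hm' : (m : ℝ) < 2 ^ N := by exact_mod_cast hm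
  have hn'' : (n' : ℝ) < 2 ^ N := by exact_mod_cast hn'
  have hm₀ : (0 : ℝ) ≤ m := m.cast_nonneg
  refine abs_add_add_abs_sub_le (abs_le.2 ⟨by linarith, by linarith⟩) ?_
  rw [abs_mul, abs_of_nonneg (n'.cast_nonneg : (0 : ℝ) ≤ n')]
  exact (mul_le_of_le_one_left n'.cast_nonneg (abs_one_sub_two_mul_tdig_le t _)).trans hn''.le

theorem Dconj_congr {t : ℝ} {N n : ℕ} (hn : n < 2 ^ (N + 1)) {x y : G}
    (h : ∀ i < N + 1, x i = y i) : Dconj t N n x = Dconj t N n y := by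
  have hm : mOf t N < 2 ^ (N + 1) :=
    (mOf_lt t N).trans (Nat.pow_lt_pow_right one_lt_two N.lt_succ_self)
  rw [Dconj, Dconj, Dir_congr hn.le h, Dir_congr hm.le h, walsh_congr hm h,
    Dir_congr (Nat.pow_le_pow_right two_pos N.le_succ) h]

theorem setIntegral_Ico_eq_sum_of_dyadic_step {E : Type*} [NormedAddCommGroup E]
    [NormedSpace ℝ E] [CompleteSpace E] {M : ℕ} {f : ℝ → E} {g : ℕ → E}
    (hf : ∀ x ∈ Set.Ico (0 : ℝ) 1, f x = g ⌊x * 2 ^ M⌋₊) :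
    ∫ x in Set.Ico (0 : ℝ) 1, f x = (2 ^ M : ℝ)⁻¹ • ∑ j ∈ range (2 ^ M), g j := by
  set a : ℕ → ℝ := fun j => j / 2 ^ M
  have hM : (0 : ℝ) < 2 ^ M := by positivity
  have ha : ∀ j, a j ≤ a (j + 1) := fun j => by simp only [a]; gcongr; simp
  have hcell : ∀ j < 2 ^ M, ∀ x ∈ Set.Ioo (a j) (a (j + 1)), f x = g j := by
    intro j hj x ⟨hx₁, hx₂⟩
    simp only [a, div_lt_iff₀ hM, lt_div_iff₀ hM, Nat.cast_succ] at hx₁ hx₂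
    have hx₀ : 0 ≤ x := by nlinarith [j.cast_nonneg (α := ℝ)]
    have hj' : ((j + 1 : ℕ) : ℝ) ≤ 2 ^ M := by exact_mod_cast hj
    rw [hf x ⟨hx₀, by push_cast at hj'; nlinarith⟩,
      (Nat.floor_eq_iff (by positivity)).2 ⟨hx₁.le, hx₂⟩]
  have hpiece : ∀ j < 2 ^ M, ∫ x in a j..a (j + 1), f x = (2 ^ M : ℝ)⁻¹ • g j := by
    intro j hj
    rw [intervalIntegral.integral_of_le (ha j), integral_Ioc_eq_integral_Ioo,
      setIntegral_congr_fun measurableSet_Ioo (hcell j hj), setIntegral_const,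
      Real.volume_real_Ioo_of_le (ha j)]
    congr 1
    simp only [a]
    push_cast
    ring
  have hint : ∀ j < 2 ^ M, IntervalIntegrable f volume (a j) (a (j + 1)) := fun j hj =>
    (intervalIntegrable_iff_integrableOn_Ioo_of_le (ha j)).2 <|
      (integrableOn_const measure_Ioo_lt_top.ne).congr_fun (fun x hx => (hcell j hj x hx).symm)
        measurableSet_Ioo
  have ha₀ : a 0 = 0 := by simp [a]
  have ha₁ : a (2 ^ M) = 1 := by simp [a]
  rw [integral_Ico_eq_integral_Ioo, ← integral_Ioc_eq_integral_Ioo,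
    ← intervalIntegral.integral_of_le zero_le_one, ← ha₀, ← ha₁,
    ← intervalIntegral.sum_integral_adjacent_intervals hint, smul_sum]
  exact sum_congr rfl fun j hj => hpiece j (mem_range.1 hj)

theorem toG_apply_eq {M i : ℕ} (hi : i < M) (x : ℝ) :
    toG x i = ((⌊x * 2 ^ M⌋ / 2 ^ (M - 1 - i) : ℤ) : ZMod 2) := by
  have hx : x * 2 ^ (i + 1) = x * 2 ^ M / ((2 ^ (M - 1 - i) : ℕ) : ℝ) := by
    rw [eq_div_iff (by positivity), Nat.cast_pow, Nat.cast_ofNat, mul_assoc, ← pow_add,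
      show i + 1 + (M - 1 - i) = M by omega]
  rw [toG, hx, Int.floor_div_natCast]
  push_cast
  rfl

theorem toG_natCast_div_apply {M i : ℕ} (hi : i < M) (j : ℕ) :
    toG (j / 2 ^ M) i = ((j / 2 ^ (M - 1 - i) : ℕ) : ZMod 2) := by
  rw [toG_apply_eq hi, div_mul_cancel₀ _ (by positivity), Int.floor_natCast]
  rfl

theorem measurable_walsh (k : ℕ) : Measurable (walsh k) := by
  unfold walsh
  refine Finset.measurable_prod _ fun i _ => ?_
  split_ifs <;> fun_prop

theorem measurable_Dconj (t : ℝ) (N n : ℕ) : Measurable (Dconj t N n) := by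
  unfold Dconj Dir
  have := measurable_walsh
  fun_prop

theorem Leb_eq_average (t : ℝ) {N n : ℕ} (hn : n < 2 ^ (N + 1)) :
    Leb t N n = (2 ^ (N + 1) : ℝ)⁻¹ *
      ∑ j ∈ range (2 ^ (N + 1)), |Dconj t N n (toG (j / 2 ^ (N + 1)))| := by
  have hmeas : Measurable toG := by unfold toG; fun_prop
  rw [Leb, muG, integral_map hmeas.aemeasurable (measurable_Dconj t N n).abs.aestronglyMeasurable]
  rw [← smul_eq_mul]
  refine setIntegral_Ico_eq_sum_of_dyadic_step fun x hx =>
    congrArg _ (Dconj_congr hn fun i hi => ?_)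
  rw [toG_natCast_div_apply hi, toG_apply_eq hi,
    ← Int.natCast_floor_eq_floor (by positivity [hx.1])]
  push_cast
  rfl

theorem sum_range_two_mul {M : Type*} [AddCommMonoid M] (f : ℕ → M) (K : ℕ) :
    ∑ j ∈ range (2 * K), f j = ∑ q ∈ range K, (f (2 * q) + f (2 * q + 1)) := by
  induction K with
  | zero => simp
  | succ K ih =>
    rw [mul_add, mul_one, sum_range_succ, sum_range_succ, ih, sum_range_succ, add_assoc]

theorem sum_Ico_one_two_pow {M : Type*} [AddCommMonoid M] (f : ℕ → M) (N : ℕ) :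
    ∑ q ∈ Ico 1 (2 ^ N), f q = ∑ l ∈ range N, ∑ q ∈ Ico (2 ^ l) (2 ^ (l + 1)), f q := by
  induction N with
  | zero => simp
  | succ N ih =>
    rw [sum_range_succ, ← ih, sum_Ico_consecutive f Nat.one_le_two_pow
      (Nat.pow_le_pow_right two_pos N.le_succ)]

theorem sum_range_two_pow_mul_sum_le {w : ℕ → ℝ} (hw : ∀ j, 0 ≤ w j) (N : ℕ) :
    ∑ l ∈ range N, 2 ^ l * ∑ j ∈ range (N - l), w j * 2 ^ j
      ≤ 2 ^ N * ∑ j ∈ range N, w j := by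
  have hswap : ∑ l ∈ range N, ∑ j ∈ range (N - l), w j * 2 ^ (j + l)
      = ∑ j ∈ range N, ∑ l ∈ range (N - j), w j * 2 ^ (j + l) :=
    sum_comm' fun l j => by simp only [mem_range]; omega
  simp_rw [mul_sum, mul_left_comm _ (w _), ← pow_add, add_comm _ (_ : ℕ)] at hswap ⊢
  rw [hswap]
  refine sum_le_sum fun j hj => ?_
  rw [← mul_sum, mul_comm]
  refine mul_le_mul_of_nonneg_right ?_ (hw j)
  calc ∑ l ∈ range (N - j), (2 : ℝ) ^ (j + l)
        = 2 ^ j * ∑ l ∈ range (N - j), (2 : ℝ) ^ l := by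
        rw [mul_sum]; simp_rw [pow_add]
    _ ≤ 2 ^ j * 2 ^ (N - j) := by
        gcongr
        rw [geom_sum_eq (by norm_num : (2 : ℝ) ≠ 1)]
        norm_num
    _ = 2 ^ N := by rw [← pow_add, Nat.add_sub_cancel' (mem_range.1 hj).le]

theorem sum_range_two_pow_succ_le_of_pairs {N : ℕ} {F w : ℕ → ℝ} {B : ℝ}
    (hw : ∀ j, 0 ≤ w j) (h₀ : F 0 + F 1 ≤ B)
    (hpair : ∀ l < N, ∀ q ∈ Ico (2 ^ l) (2 ^ (l + 1)),
      F (2 * q) + F (2 * q + 1) ≤ 2 * ∑ j ∈ range (N - l), w j * 2 ^ j) :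
    ∑ j ∈ range (2 ^ (N + 1)), F j ≤ B + 2 ^ (N + 1) * ∑ j ∈ range N, w j := by
  have hblock : ∀ l < N, ∑ q ∈ Ico (2 ^ l) (2 ^ (l + 1)), (F (2 * q) + F (2 * q + 1))
      ≤ 2 * (2 ^ l * ∑ j ∈ range (N - l), w j * 2 ^ j) := fun l hl => by
    refine (sum_le_card_nsmul _ _ _ (hpair l hl)).trans_eq ?_
    rw [Nat.card_Ico, pow_succ, mul_two, Nat.add_sub_cancel, nsmul_eq_mul]
    push_cast
    ring
  rw [pow_succ, mul_comm, sum_range_two_mul, range_eq_Ico, sum_eq_sum_Ico_succ_bot (by positivity),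
    sum_Ico_one_two_pow]
  calc _ ≤ B + ∑ l ∈ range N, 2 * (2 ^ l * ∑ j ∈ range (N - l), w j * 2 ^ j) :=
        add_le_add h₀ (sum_le_sum fun l hl => hblock l (mem_range.1 hl))
    _ ≤ _ := by
        rw [← mul_sum, pow_succ', mul_assoc]
        gcongr
        exact sum_range_two_pow_mul_sum_le hw N

section Cells

variable {N : ℕ}

theorem toG_cell_apply (j : ℕ) {i : ℕ} (hi : i < N + 1) :
    toG ((j : ℝ) / 2 ^ (N + 1)) i = ((j / 2 ^ (N - i) : ℕ) : ZMod 2) := by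
  rw [toG_natCast_div_apply hi, Nat.add_sub_cancel]

theorem toG_cell_two_mul_add_one_apply (q : ℕ) {i : ℕ} (hi : i < N) :
    toG (((2 * q + 1 : ℕ) : ℝ) / 2 ^ (N + 1)) i
      = toG (((2 * q : ℕ) : ℝ) / 2 ^ (N + 1)) i := by
  rw [toG_cell_apply _ (by omega), toG_cell_apply _ (by omega),
    show N - i = N - i - 1 + 1 by omega, pow_succ', ← Nat.div_div_eq_div_mul,
    ← Nat.div_div_eq_div_mul, show (2 * q + 1) / 2 = 2 * q / 2 by omega]

theorem toG_cell_two_mul_apply_self (q : ℕ) :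
    toG (((2 * q : ℕ) : ℝ) / 2 ^ (N + 1)) N = 0 := by
  rw [toG_cell_apply _ N.lt_succ_self, Nat.sub_self, pow_zero, Nat.div_one,
    ZMod.natCast_eq_zero_iff_even]
  exact even_two_mul q

theorem toG_cell_two_mul_add_one_apply_self (q : ℕ) :
    toG (((2 * q + 1 : ℕ) : ℝ) / 2 ^ (N + 1)) N = 1 := by
  rw [toG_cell_apply _ N.lt_succ_self, Nat.sub_self, pow_zero, Nat.div_one,
    ZMod.natCast_eq_one_iff_odd]
  exact odd_two_mul_add_one q

theorem toG_cell_two_mul_apply_of_lt {l q i : ℕ} (hq : q < 2 ^ (l + 1)) (hi : i < N - 1 - l) :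
    toG (((2 * q : ℕ) : ℝ) / 2 ^ (N + 1)) i = 0 := by
  have hq' : 2 * q < 2 ^ (N - i) :=
    calc 2 * q < 2 ^ (l + 2) := by rw [pow_succ]; omega
      _ ≤ 2 ^ (N - i) := Nat.pow_le_pow_right two_pos (by omega)
  rw [toG_cell_apply _ (by omega), Nat.div_eq_of_lt hq', Nat.cast_zero]

theorem toG_cell_two_mul_apply_eq_one {l q : ℕ} (hl : l < N)
    (hq : q ∈ Ico (2 ^ l) (2 ^ (l + 1))) :
    toG (((2 * q : ℕ) : ℝ) / 2 ^ (N + 1)) (N - 1 - l) = 1 := by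
  obtain ⟨hq₁, hq₂⟩ := mem_Ico.1 hq
  rw [toG_cell_apply _ (by omega), show N - (N - 1 - l) = l + 1 by omega,
    Nat.div_eq_of_lt_le (k := 1) (by rw [pow_succ]; omega) (by rw [pow_succ]; omega),
    Nat.cast_one]

end Cells

theorem sum_abs_Dconj_le {t : ℝ} {N n : ℕ} (hn₁ : 2 ^ N ≤ n) (hn₂ : n < 2 ^ (N + 1)) :
    ∑ j ∈ range (2 ^ (N + 1)), |Dconj t N n (toG (j / 2 ^ (N + 1)))|
      ≤ 2 * 2 ^ N + 2 ^ (N + 1) * ∑ j ∈ range N, (jumpWeight n (mOf t N) j : ℝ) := by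
  refine sum_range_two_pow_succ_le_of_pairs (fun j => Nat.cast_nonneg _) ?_ fun l hl q hq => ?_
  · refine abs_Dconj_add_abs_Dconj_le_of_origin hn₁ hn₂ (fun i hi => ?_) (fun i hi => ?_) ?_
    · rw [toG_cell_apply _ hi, Nat.zero_div, Nat.cast_zero]
    · rw [toG_cell_apply _ (by omega), Nat.div_eq_of_lt (Nat.one_lt_two_pow (by omega)),
        Nat.cast_zero]
    · rw [toG_cell_apply _ N.lt_succ_self, Nat.sub_self, pow_zero, Nat.div_one, Nat.cast_one]
  · have := abs_Dconj_add_abs_Dconj_le_of_annulus (t := t) hn₁ hn₂ (by omega : N - 1 - l < N)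
      (fun i hi => toG_cell_two_mul_apply_of_lt (mem_Ico.1 hq).2 hi)
      (toG_cell_two_mul_apply_eq_one hl hq) (fun i hi => (toG_cell_two_mul_add_one_apply q hi).symm)
      (toG_cell_two_mul_apply_self q) (toG_cell_two_mul_add_one_apply_self q)
    rwa [show N - 1 - l + 1 = N - l by omega] at this

theorem card_filter_digitJump_le_V (m N : ℕ) : #{j ∈ range N | digitJump m j} ≤ V m := by
  set c : ℕ → ℕ := fun k => if m.testBit (k + 1) ≠ m.testBit k then 1 else 0
  have hc : ∀ k, m ≤ k → c k = 0 := fun k hk => by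
    have hk : m < 2 ^ k := hk.trans_lt Nat.lt_two_pow_self
    simp [c, Nat.testBit_lt_two_pow hk, testBit_eq_false_of_lt_two_pow_of_le hk k.le_succ]
  cases N with
  | zero => simp
  | succ K =>
    have hK : ∑ k ∈ range K, c k ≤ ∑ k ∈ range m, c k :=
      calc ∑ k ∈ range K, c k = ∑ k ∈ range (min K m), c k :=
            (sum_subset (range_subset_range.2 (min_le_left K m)) fun k hk hk' => hc k (by
              simp only [mem_range] at hk hk'; omega)).symm
        _ ≤ _ := sum_le_sum_of_subset (range_subset_range.2 (min_le_right K m))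
    have h₀ : (if digitJump m 0 then 1 else 0) = bit m 0 := by
      cases h : m.testBit 0 <;> simp [digitJump, bit, h]
    rw [card_filter, sum_range_succ', h₀, V, add_comm (bit m 0)]
    gcongr
    refine le_of_eq_of_le (sum_congr rfl fun k _ => ?_) hK
    simp [c, digitJump]

theorem card_filter_digitJump_le_card_Tset (n m N : ℕ) :
    #{j ∈ range N | digitJump n j && !digitJump m j} ≤ #(Tset N n m) + 1 := by
  refine (card_le_card fun j hj => ?_).trans (card_insert_le 0 _)
  obtain ⟨hjN, hj⟩ := mem_filter.1 hj
  rcases eq_or_ne j 0 with rfl | hj₀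
  · exact mem_insert_self 0 _
  refine mem_insert_of_mem (mem_filter.2 ⟨mem_Icc.2 ⟨by omega, by simp at hjN; omega⟩, ?_⟩)
  simpa [digitJump, hj₀] using hj

theorem sum_jumpWeight_le (n m N : ℕ) :
    ∑ j ∈ range N, jumpWeight n m j ≤ 2 * V m + #(Tset N n m) + 1 := by
  have hsplit : ∀ j, jumpWeight n m j = 2 * (if digitJump m j then 1 else 0)
      + if (digitJump n j && !digitJump m j) then 1 else 0 := fun j => by
    unfold jumpWeight; cases digitJump m j <;> cases digitJump n j <;> rfl
  rw [sum_congr rfl fun j _ => hsplit j, sum_add_distrib, ← mul_sum, ← card_filter,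
    ← card_filter]
  linarith [card_filter_digitJump_le_V m N, card_filter_digitJump_le_card_Tset n m N]

theorem Leb_upper_general (t : ℝ) (N n : ℕ)
    (h1 : 2^N ≤ n) (h2 : n < 2^(N+1)) :
    Leb t N n ≤
      2 * (V (mOf t N) : ℝ) + ((Tset N n (mOf t N)).card : ℝ) + 2 := by
  have hW : ∑ j ∈ range N, (jumpWeight n (mOf t N) j : ℝ)
      ≤ 2 * V (mOf t N) + #(Tset N n (mOf t N)) + 1 := by
    exact_mod_cast sum_jumpWeight_le n (mOf t N) N
  set W := ∑ j ∈ range N, (jumpWeight n (mOf t N) j : ℝ)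
  calc Leb t N n = (2 ^ (N + 1) : ℝ)⁻¹ *
        ∑ j ∈ range (2 ^ (N + 1)), |Dconj t N n (toG (j / 2 ^ (N + 1)))| := Leb_eq_average t h2
    _ ≤ (2 ^ (N + 1) : ℝ)⁻¹ * (2 * 2 ^ N + 2 ^ (N + 1) * W) := by
        gcongr; exact sum_abs_Dconj_le h1 h2
    _ = 1 + W := by field_simp; ring
    _ ≤ _ := by linarith

/-- Upper bound: `L_n^{(t)} ≤ 2V(m) + |T(n,m)| + 2`. -/
theorem Leb_upper (t : ℝ) (ht : t ∈ Set.Ico (0:ℝ) 1) (N n : ℕ)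
    (h1 : 2^N ≤ n) (h2 : n < 2^(N+1)) :
    Leb t N n ≤
      2 * (V (mOf t N) : ℝ) + ((Tset N n (mOf t N)).card : ℝ) + 2 :=
  Leb_upper_general t N n h1 h2
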